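/- arXiv:0904.4829 — 3 statements merged into one kernel-verified Lean document; each statement's English description precedes it below -/
import Mathlib

section
/- (Stollmann's lemma.) Let J be a finite index set with |J| = m, let μ be a probability measure on ℝ, and let μ^J be the product measure on ℝ^J with all marginals equal to μ. If Φ : ℝ^J → ℝ is diagonally monotone, then for every open interval I ⊂ ℝ of length |I|, μ^J{ q ∈ ℝ^J : Φ(q) ∈ I } ≤ |J| · s(μ, |I|). -/
open MeasureTheory ProbabilityTheory Matrix

noncomputable section

/-- The lattice `ℤ^d`. -/
abbrev Zd (d : ℕ) := Fin d → ℤ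

/-- The torus `𝕋^ν = ℝ^ν/ℤ^ν` with the sup-distance. -/
abbrev Torus (ν : ℕ) := Fin ν → AddCircle (1 : ℝ)

/-- The canonical representative of a point of `ℝ/ℤ` in `[0,1)`. -/
def torusRep (x : AddCircle (1 : ℝ)) : ℝ := (AddCircle.equivIco 1 0 x : ℝ)

/-- The index of the dyadic cube of the partition `𝒞_n` that contains `ω`:
`ω` belongs to `∏_j [i_j 2^{-n}, (i_j+1) 2^{-n})` iff `dyadicIdx n ω = i`. -/
def dyadicIdx {ν : ℕ} (n : ℕ) (ω : Torus ν) : Fin ν → ℕ :=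
  fun j => (⌊torusRep (ω j) * 2 ^ n⌋).toNat

/-- The lattice cube of sidelength `2L+1` centred at `u ∈ ℤ^d`. -/
def cube1 (d L : ℕ) (u : Zd d) : Finset (Zd d) :=
  Fintype.piFinset fun j => Finset.Icc (u j - L) (u j + L)

/-- The two-particle cube `Λ_L(u₁) × Λ_L(u₂) ⊂ ℤ^{2d}`. -/
def cube2 (d L : ℕ) (u : Zd d × Zd d) : Finset (Zd d × Zd d) :=
  cube1 d L u.1 ×ˢ cube1 d L u.2

/-- A single-particle cube of real radius `R` centred at `v` (as a set). -/
def cubeR (d : ℕ) (R : ℝ) (v : Zd d) : Set (Zd d) :=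
  {x | ∀ j, |(x j : ℝ) - (v j : ℝ)| ≤ R}

/-- The two-particle Hamiltonian `Δ₁ + Δ₂ + W(x₁) + W(x₂) + U(x₁,x₂)` restricted
(with Dirichlet boundary conditions) to a finite two-particle box `Λ`. -/
def ham2 {d : ℕ} (Λ : Finset (Zd d × Zd d)) (W : Zd d → ℝ) (U : Zd d → Zd d → ℝ) :
    Matrix Λ Λ ℝ := fun x y =>
  (if (∑ j, |x.1.1 j - y.1.1 j|) + (∑ j, |x.1.2 j - y.1.2 j|) = 1 then 1 else 0) +
  (if x = y then W x.1.1 + W x.1.2 + U x.1.1 x.1.2 else 0)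

/-- The spectrum of the finite-volume two-particle Hamiltonian. -/
def spec2 {d : ℕ} (Λ : Finset (Zd d × Zd d)) (W : Zd d → ℝ) (U : Zd d → Zd d → ℝ) : Set ℝ :=
  spectrum ℝ (ham2 Λ W U)

/-- The randelette potential `v(ω;θ) = ∑_{n≥1} a_n ∑_k θ_{n,k} φ_{n,k}(ω)`; since for a fixed
`n` exactly one indicator `φ_{n,k}(ω)` is nonzero, namely the one with `k = dyadicIdx n ω`,
the inner sum collapses. -/
def vpot {ν : ℕ} (a : ℕ → ℝ) (θv : ℕ → (Fin ν → ℕ) → ℝ) (ω : Torus ν) : ℝ :=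
  ∑' n : ℕ, a (n + 1) * θv (n + 1) (dyadicIdx (n + 1) ω)

/-- A function `Φ : ℝ^J → ℝ` is diagonally monotone (DM). -/
def DiagMonotone {J : Type*} [Fintype J] (Φ : (J → ℝ) → ℝ) : Prop :=
  (∀ q r : J → ℝ, (∀ j, 0 ≤ r j) → Φ q ≤ Φ (q + r)) ∧
  (∀ (q : J → ℝ) (t : ℝ), 0 < t → Φ q + t ≤ Φ (q + fun _ => t))

/-- A family of Hermitian matrices `B(q)`, `q ∈ ℝ^J`, is diagonally monotone. -/
def DiagMonotoneOp {J n : Type*} [Fintype J] [Fintype n] [DecidableEq n]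
    (B : (J → ℝ) → Matrix n n ℝ) : Prop :=
  (∀ q r : J → ℝ, (∀ j, 0 ≤ r j) → (B (q + r) - B q).PosSemidef) ∧
  (∀ f : n → ℝ, f ⬝ᵥ f = 1 → DiagMonotone fun q => f ⬝ᵥ (B q).mulVec f)

/-- `s(μ, ε) = sup_a μ([a, a+ε])`. -/
def sConc (μ : Measure ℝ) (ε : ℝ) : ENNReal := ⨆ a : ℝ, μ (Set.Icc a (a + ε))



lemma pi_apply_unique {ι : Type*} [Unique ι] (ft : Fintype ι)
    (mu : Measure ℝ) [IsProbabilityMeasure mu] (T : Set (ι → ℝ)) (hT : MeasurableSet T) :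
    @Measure.pi ι (fun _ => ℝ) ft (fun _ => Real.measurableSpace) (fun _ => mu) T
      = mu {t : ℝ | (fun _ : ι => t) ∈ T} := by
  set g := MeasurableEquiv.funUnique ι ℝ with hg
  have hgsymm : ∀ (t : ℝ), g.symm t = fun _ : ι => t := by
    intro t; funext z
    have h1 : g.symm t z = g.symm t default := by rw [Subsingleton.elim z default]
    have h2 : g (g.symm t) = t := g.apply_symm_apply t
    rw [h1, ← h2]; rfl
  have h3 := (measurePreserving_funUnique mu ι).measure_preimage
    ((g.symm.measurable hT).nullMeasurableSet)
  have h4 : g ⁻¹' (g.symm ⁻¹' T) = T := by ext x; simp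
  rw [h4] at h3
  have hft : (ft : Fintype ι) = Unique.fintype := Subsingleton.elim _ _
  rw [hft, h3]
  have h5 : (⇑g.symm ⁻¹' T) = {t : ℝ | (fun _ : ι => t) ∈ T} := by
    ext t
    simp only [Set.mem_preimage, Set.mem_setOf_eq, hgsymm t]
  rw [h5]

lemma stollmann_step {J : Type*} [Fintype J] [DecidableEq J]
    (mu : Measure ℝ) [IsProbabilityMeasure mu]
    (A : Set (J → ℝ)) (hA : MeasurableSet A)
    (hup : ∀ q ∈ A, ∀ r : J → ℝ, (∀ j, 0 ≤ r j) → q + r ∈ A)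
    (k : J) (l : ℝ) :
    (Measure.pi fun _ : J => mu)
      (A \ {q | (fun j => q j - if j = k then l else 0) ∈ A}) ≤ sConc mu l := by
  classical
  set D : Set (J → ℝ) := A \ {q | (fun j => q j - if j = k then l else 0) ∈ A} with hD
  have hτ : Measurable fun (q : J → ℝ) => (fun j => q j - if j = k then l else 0) :=
    measurable_pi_lambda _ fun j => (measurable_pi_apply j).sub measurable_const
  have hDmeas : MeasurableSet D := hA.diff (hτ hA)
  haveI : Unique {j : J // j = k} := ⟨⟨⟨k, rfl⟩⟩, fun a => Subtype.ext a.2⟩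
  set e := MeasurableEquiv.piEquivPiSubtypeProd (fun _ : J => ℝ) (fun j => j = k) with he
  have hmp := measurePreserving_piEquivPiSubtypeProd (fun _ : J => mu) (fun j => j = k)
  set S : Set _ := e.symm ⁻¹' D with hS
  have hSmeas : MeasurableSet S := e.symm.measurable hDmeas
  have heD : e ⁻¹' S = D := by ext q; simp [hS]
  have h1 := hmp.measure_preimage hSmeas.nullMeasurableSet
  rw [heD] at h1
  rw [h1, Measure.prod_apply_symm hSmeas]
  refine le_trans (lintegral_mono (g := fun _ => sConc mu l) (fun y => ?_)) ?_
  swap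
  · rw [lintegral_const]
    simp
  · 
    have hTmeas : MeasurableSet ((fun x => (x, y)) ⁻¹' S) :=
      (measurable_prodMk_right) hSmeas
    rw [pi_apply_unique _ mu _ hTmeas]
    -- the section as a path in ℝ
    set Pt : ℝ → (J → ℝ) := fun t => fun j => if h : j = k then t else y ⟨j, h⟩ with hPt
    have hpre : {t : ℝ | (fun _ => t) ∈ (fun x => (x, y)) ⁻¹' S} = {t : ℝ | Pt t ∈ D} := by
      ext t
      have heq : e.symm ((fun _ => t), y) = Pt t := by
        funext j
        by_cases h : j = k
        · simp [he, MeasurableEquiv.piEquivPiSubtypeProd, Equiv.piEquivPiSubtypeProd, h, hPt]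
        · simp [he, MeasurableEquiv.piEquivPiSubtypeProd, Equiv.piEquivPiSubtypeProd, h, hPt]
      simp only [Set.mem_setOf_eq, Set.mem_preimage, hS, heq]
    rw [hpre]
    -- properties of Pt
    have hPt_shift : ∀ t s : ℝ, Pt (t + s) = Pt t + fun j => if j = k then s else 0 := by
      intro t s; funext j
      by_cases h : j = k <;> simp [hPt, h]
    have hPt_sub : ∀ t : ℝ, (fun j => Pt t j - if j = k then l else 0) = Pt (t - l) := by
      intro t; funext j
      by_cases h : j = k <;> simp [hPt, h]
    set U : Set ℝ := {t | Pt t ∈ A} with hU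
    have hUup : ∀ t ∈ U, ∀ t', t ≤ t' → t' ∈ U := by
      intro t ht t' htt'
      have h5 := hup (Pt t) ht (fun j => if j = k then t' - t else 0)
        (fun j => by by_cases h : j = k <;> simp [h]; linarith)
      have h4 : Pt t' = Pt t + fun j => if j = k then t' - t else 0 := by
        have := hPt_shift t (t' - t); rwa [add_sub_cancel] at this
      rw [hU, Set.mem_setOf_eq, h4]; exact h5
    have hmemD : ∀ t : ℝ, Pt t ∈ D ↔ (t ∈ U ∧ (t - l) ∉ U) := by
      intro t
      rw [hD]
      constructor
      · rintro ⟨h1', h2'⟩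
        exact ⟨h1', by rw [hU, Set.mem_setOf_eq, ← hPt_sub t]; exact h2'⟩
      · rintro ⟨h1', h2'⟩
        exact ⟨h1', by rw [Set.mem_setOf_eq, hPt_sub t]; exact h2'⟩
    rcases Set.eq_empty_or_nonempty {t : ℝ | Pt t ∈ D} with hemp | ⟨t₀, ht₀⟩
    · rw [hemp]; simp
    · have ht₀' := (hmemD t₀).1 ht₀
      have hlb : ∀ t : ℝ, Pt t ∈ D → ∀ u ∈ U, t - l ≤ u := by
        intro t ht u hu
        by_contra hcon
        push_neg at hcon
        exact ((hmemD t).1 ht).2 (hUup u hu (t - l) hcon.le)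
      have hbdd : BddBelow U := ⟨t₀ - l, fun u hu => hlb t₀ ht₀ u hu⟩
      have hne : U.Nonempty := ⟨t₀, ht₀'.1⟩
      set a : ℝ := sInf U with ha
      have hsubI : {t : ℝ | Pt t ∈ D} ⊆ Set.Icc a (a + l) := by
        intro t ht
        constructor
        · exact csInf_le hbdd ((hmemD t).1 ht).1
        · have : t - l ≤ a := le_csInf hne (fun u hu => hlb t ht u hu)
          linarith
      calc mu {t : ℝ | Pt t ∈ D} ≤ mu (Set.Icc a (a + l)) := measure_mono hsubI
        _ ≤ sConc mu l := le_iSup (fun b => mu (Set.Icc b (b + l))) a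

/-- **Stollmann's lemma.** If `Φ : ℝ^J → ℝ` is diagonally monotone and `μ^J` is the
product measure with identical marginals `μ`, then for every open interval `I` of
length `|I|` one has `μ^J {q : Φ q ∈ I} ≤ |J| ⬝ s(μ, |I|)`. -/
theorem stollmann_lemma {J : Type*} [Fintype J]
    (mu : Measure ℝ) [IsProbabilityMeasure mu]
    (Phi : (J → ℝ) → ℝ) (hPhi : DiagMonotone Phi)
    (I : Set ℝ) (c l : ℝ) (hI : I = Set.Ioo c (c + l)) :
    (Measure.pi fun _ : J => mu) {q | Phi q ∈ I} ≤
      (Fintype.card J : ENNReal) * sConc mu l := by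
  classical
  obtain ⟨hPhi1, hPhi2⟩ := hPhi
  subst hI
  rcases le_or_gt l 0 with hl | hl
  · have h0 : {q : J → ℝ | Phi q ∈ Set.Ioo c (c + l)} = ∅ := by
      ext q
      simp only [Set.mem_setOf_eq, Set.mem_Ioo, Set.mem_empty_iff_false, iff_false, not_and]
      intro h1 h2
      linarith
    rw [h0]
    simp
  set m := Fintype.card J with hm
  set σ : Fin m ≃ J := (Fintype.equivFin J).symm with hσ
  set A : Set (J → ℝ) := {q | ∃ δ : ℚ, 0 < δ ∧ ∀ p : J → ℚ,
      (∀ j, q j < (p j : ℝ)) → c + (δ : ℝ) ≤ Phi (fun j => (p j : ℝ))} with hAdef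
  have hAmeas : MeasurableSet A := by
    have hrw : A = ⋃ δ : ℚ, ⋃ _ : 0 < δ, ⋂ p : J → ℚ,
        {q : J → ℝ | (∀ j, q j < (p j : ℝ)) → c + (δ : ℝ) ≤ Phi (fun j => (p j : ℝ))} := by
      ext q
      simp only [hAdef, Set.mem_setOf_eq, Set.mem_iUnion, Set.mem_iInter, exists_prop]
    rw [hrw]
    refine MeasurableSet.iUnion fun δ => MeasurableSet.iUnion fun _ =>
      MeasurableSet.iInter fun p => ?_
    by_cases h : c + (δ : ℝ) ≤ Phi (fun j => (p j : ℝ))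
    · have : {q : J → ℝ | (∀ j, q j < (p j : ℝ)) → c + (δ : ℝ) ≤ Phi (fun j => (p j : ℝ))}
          = Set.univ := by
        ext q; simp [h]
      rw [this]; exact MeasurableSet.univ
    · have : {q : J → ℝ | (∀ j, q j < (p j : ℝ)) → c + (δ : ℝ) ≤ Phi (fun j => (p j : ℝ))}
          = (⋂ j, (fun q : J → ℝ => q j) ⁻¹' Set.Iio (p j : ℝ))ᶜ := by
        ext q; simp [h]
      rw [this]
      exact (MeasurableSet.iInter fun j =>
        (measurable_pi_apply j) measurableSet_Iio).compl
  have hAup : ∀ q ∈ A, ∀ r : J → ℝ, (∀ j, 0 ≤ r j) → q + r ∈ A := by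
    rintro q ⟨δ, hδ, hq⟩ r hr
    refine ⟨δ, hδ, fun p hp => hq p fun j => ?_⟩
    have h1 := hr j
    have h2 := hp j
    simp only [Pi.add_apply] at h2
    linarith
  set sh : ℕ → (J → ℝ) := fun i j => if ((σ.symm j : Fin m) : ℕ) < i then l else 0 with hsh
  set As : ℕ → Set (J → ℝ) := fun i => {q | q - sh i ∈ A} with hAs
  have hAs0 : As 0 = A := by
    ext q
    simp only [hAs, Set.mem_setOf_eq, hsh]
    have : q - (fun j => if ((σ.symm j : Fin m) : ℕ) < 0 then l else 0) = q := by
      funext j; simp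
    rw [this]
  have hAsmeas : ∀ i, MeasurableSet (As i) := by
    intro i
    have : As i = (fun q : J → ℝ => q - sh i) ⁻¹' A := rfl
    rw [this]
    exact (measurable_pi_lambda _ fun j =>
      (measurable_pi_apply j).sub measurable_const) hAmeas
  have hAsup : ∀ i, ∀ q ∈ As i, ∀ r : J → ℝ, (∀ j, 0 ≤ r j) → q + r ∈ As i := by
    intro i q hq r hr
    have h1 : (q + r) - sh i = (q - sh i) + r := by funext j; simp; ring
    simp only [hAs, Set.mem_setOf_eq] at hq ⊢
    rw [h1]
    exact hAup _ hq r hr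
  -- the inclusion of the event
  have hsub : {q : J → ℝ | Phi q ∈ Set.Ioo c (c + l)} ⊆ As 0 \ As m := by
    rintro q ⟨hq1, hq2⟩
    constructor
    · rw [hAs0]
      obtain ⟨δ, hδ1, hδ2⟩ := exists_rat_btwn (sub_pos.2 hq1)
      have hδ0 : (0 : ℚ) < δ := by exact_mod_cast hδ1
      refine ⟨δ, hδ0, fun p hp => ?_⟩
      have hmono := hPhi1 q (fun j => (p j : ℝ) - q j)
        (fun j => le_of_lt (sub_pos.2 (hp j)))
      have heq : (q + fun j => (p j : ℝ) - q j) = fun j => (p j : ℝ) := by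
        funext j; simp
      rw [heq] at hmono
      linarith
    · intro hqm
      obtain ⟨δ, hδ, hδ2⟩ := hqm
      have hδ0 : (0 : ℝ) < (δ : ℝ) := by exact_mod_cast hδ
      have hshm : ∀ j, (q - sh m) j = q j - l := by
        intro j
        simp only [Pi.sub_apply, hsh]
        rw [if_pos (σ.symm j).isLt]
      set ε : ℝ := min ((δ : ℝ) / 2) (l / 2) with hε
      have hε0 : 0 < ε := lt_min (by linarith) (by linarith)
      have hεδ : ε < (δ : ℝ) := lt_of_le_of_lt (min_le_left _ _) (by linarith)
      have hεl : ε < l := lt_of_le_of_lt (min_le_right _ _) (by linarith)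
      choose p hp1 hp2 using fun j =>
        exists_rat_btwn (show q j - l < q j - l + ε by linarith)
      have h1 : c + (δ : ℝ) ≤ Phi (fun j => (p j : ℝ)) :=
        hδ2 p (fun j => by rw [hshm j]; exact hp1 j)
      have h2 := hPhi2 (fun j => (p j : ℝ)) (l - ε) (by linarith)
      have h3 := hPhi1 ((fun j => (p j : ℝ)) + fun _ => l - ε)
        (fun j => q j - ((p j : ℝ) + (l - ε)))
        (fun j => by have := hp2 j; linarith)
      have heq : (((fun j => (p j : ℝ)) + fun _ => l - ε)
          + fun j => q j - ((p j : ℝ) + (l - ε))) = q := by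
        funext j; simp only [Pi.add_apply]; ring
      rw [heq] at h3
      linarith
  -- the chain
  have hchain : As 0 \ As m ⊆ ⋃ i : Fin m, (As i \ As (i + 1)) := by
    rintro q ⟨hq0, hqm⟩
    by_contra hc
    simp only [Set.mem_iUnion, Set.mem_diff, not_exists, not_and, not_not] at hc
    have hall : ∀ i, i ≤ m → q ∈ As i := by
      intro i
      induction i with
      | zero => intro _; exact hq0
      | succ n ih =>
        intro hn
        have hnm : n < m := by omega
        exact hc ⟨n, hnm⟩ (ih (by omega))
    exact hqm (hall m le_rfl)
  -- the per-step estimate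
  have hstep : ∀ i : Fin m, (Measure.pi fun _ : J => mu) (As i \ As (i + 1)) ≤ sConc mu l := by
    intro i
    have hrw : As ((i : ℕ) + 1)
        = {q : J → ℝ | (fun j => q j - if j = σ i then l else 0) ∈ As i} := by
      ext q
      simp only [hAs, Set.mem_setOf_eq]
      have : (fun j => q j - if j = σ i then l else 0) - sh i = q - sh ((i : ℕ) + 1) := by
        funext j
        simp only [Pi.sub_apply]
        by_cases hj : j = σ i
        · subst hj
          have hji : σ.symm (σ i) = i := Equiv.symm_apply_apply σ i
          simp only [hsh, hji, if_pos rfl]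
          rw [if_neg (lt_irrefl (i : ℕ)), if_pos (Nat.lt_succ_self (i : ℕ))]
          simp
        · have h1 : ((σ.symm j : Fin m) : ℕ) ≠ (i : ℕ) := by
            intro hcon
            apply hj
            have : σ.symm j = i := Fin.ext hcon
            rw [← this]; simp
          simp only [if_neg hj, hsh]
          have h2 : (((σ.symm j : Fin m) : ℕ) < (i : ℕ) + 1)
              ↔ (((σ.symm j : Fin m) : ℕ) < (i : ℕ)) := by omega
          by_cases h3 : ((σ.symm j : Fin m) : ℕ) < (i : ℕ)
          · rw [if_pos h3, if_pos (h2.2 h3)]; ring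
          · rw [if_neg h3, if_neg (fun hcon => h3 (h2.1 hcon))]; ring
      rw [this]
    rw [hrw]
    exact stollmann_step mu (As i) (hAsmeas i) (hAsup i) (σ i) l
  calc (Measure.pi fun _ : J => mu) {q | Phi q ∈ Set.Ioo c (c + l)}
      ≤ (Measure.pi fun _ : J => mu) (⋃ i : Fin m, (As i \ As (i + 1))) :=
        measure_mono (hsub.trans hchain)
    _ ≤ ∑ i : Fin m, (Measure.pi fun _ : J => mu) (As i \ As (i + 1)) :=
        measure_iUnion_fintype_le _ _
    _ ≤ ∑ _i : Fin m, sConc mu l := Finset.sum_le_sum (fun i _ => hstep i)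
    _ = (m : ENNReal) * sConc mu l := by
        rw [Finset.sum_const, Finset.card_univ, Fintype.card_fin, nsmul_eq_mul]
end
end

section
/- Let J be a finite index set and let P = ⊗_{j∈J} μ_j be a product probability measure on ℝ^J with (not necessarily identical) marginal probability measures μ_j on ℝ. If Φ : ℝ^J → ℝ is diagonally monotone, then for every open interval I ⊂ ℝ of length |I|, P{ q ∈ ℝ^J : Φ(q) ∈ I } ≤ |J| · max_{j∈J} s(μ_j, |I|). In particular, if each μ_j admits a density p_j bounded in L^∞, then P{ q : Φ(q) ∈ [a, a+ε] } ≤ |J| · max_{j∈J} ‖p_j‖_∞ · ε for every a ∈ ℝ and ε > 0. -/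
open MeasureTheory ProbabilityTheory Matrix

noncomputable section

section StollmannAux

open Function

lemma upset_coord_shift {J : Type*} [Fintype J] [DecidableEq J]
    (mu : J → Measure ℝ) [∀ j, IsProbabilityMeasure (mu j)]
    (V : Set (J → ℝ)) (hVm : MeasurableSet V)
    (hV : ∀ q ∈ V, ∀ r : J → ℝ, (∀ i, (0:ℝ) ≤ r i) → q + r ∈ V)
    (j : J) (l : ℝ) (hl : 0 < l) :
    Measure.pi mu (V \ {x | (fun i => x i - if i = j then l else 0) ∈ V}) ≤ sConc (mu j) l := by
  classical
  set W : Set (J → ℝ) := {x | (fun i => x i - if i = j then l else 0) ∈ V} with hWdef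
  have hmeas : Measurable fun (x : J → ℝ) => (fun i => x i - if i = j then l else 0) :=
    measurable_pi_lambda _ fun i => (measurable_pi_apply i).sub measurable_const
  have hWm : MeasurableSet W := hVm.preimage hmeas
  set S := V \ W with hSdef
  have hSm : MeasurableSet S := hVm.diff hWm
  have hupd : ∀ (x : J → ℝ) (t : ℝ),
      (fun i => Function.update x j t i - if i = j then l else 0) = Function.update x j (t - l) := by
    intro x t; funext i
    by_cases hi : i = j
    · subst hi; simp
    · simp [hi]
  have key : ∀ x : J → ℝ, ∫⁻ t, S.indicator 1 (Function.update x j t) ∂(mu j) ≤ sConc (mu j) l := by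
    intro x
    set T : Set ℝ := (fun t => Function.update x j t) ⁻¹' S with hTdef
    have hTm : MeasurableSet T := hSm.preimage (measurable_update x)
    have hrw : (fun t => S.indicator 1 (Function.update x j t)) = T.indicator (1 : ℝ → ENNReal) := by
      funext t
      simp only [Set.indicator_apply, Pi.one_apply, hTdef, Set.mem_preimage]
    rw [hrw, lintegral_indicator_one hTm]
    rcases T.eq_empty_or_nonempty with h | ⟨t₀, ht₀⟩
    · simp [h]
    · set Sx : Set ℝ := {t : ℝ | Function.update x j t ∈ V} with hSx
      have hup : ∀ t ∈ Sx, ∀ t', t ≤ t' → t' ∈ Sx := by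
        intro t ht t' htt'
        have heq : Function.update x j t + (fun i => if i = j then t' - t else 0)
            = Function.update x j t' := by
          funext i
          by_cases hi : i = j
          · subst hi; simp [Pi.add_apply]
          · simp [hi, Pi.add_apply]
        have := hV _ ht (fun i => if i = j then t' - t else 0)
          (fun i => by by_cases hi : i = j <;> simp [hi] <;> linarith)
        rwa [heq] at this
      have ht₀S : t₀ ∈ Sx := ht₀.1
      have ht₀n : t₀ - l ∉ Sx := by
        intro h
        apply ht₀.2
        show (fun i => Function.update x j t₀ i - if i = j then l else 0) ∈ V
        rw [hupd]; exact h
      have hbdd : BddBelow Sx := by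
        refine ⟨t₀ - l, fun s hs => ?_⟩
        by_contra hlt
        push_neg at hlt
        exact ht₀n (hup s hs _ hlt.le)
      set a : ℝ := sInf Sx with ha
      have hsub : T ⊆ Set.Icc a (a + l) := by
        intro t ht
        have htV : t ∈ Sx := ht.1
        have htW : t - l ∉ Sx := by
          intro h
          apply ht.2
          show (fun i => Function.update x j t i - if i = j then l else 0) ∈ V
          rw [hupd]; exact h
        constructor
        · exact csInf_le hbdd htV
        · by_contra hgt
          push_neg at hgt
          have : a < t - l := by linarith
          obtain ⟨s, hs, hslt⟩ := exists_lt_of_csInf_lt ⟨t₀, ht₀S⟩ this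
          exact htW (hup s hs _ hslt.le)
      calc mu j T ≤ mu j (Set.Icc a (a + l)) := measure_mono hsub
        _ ≤ sConc (mu j) l := le_iSup (fun b => mu j (Set.Icc b (b + l))) a
  have hind : Measurable (S.indicator (1 : (J → ℝ) → ENNReal)) := measurable_one.indicator hSm
  have h1 : Measure.pi mu S = ∫⁻ x, S.indicator 1 x ∂Measure.pi mu :=
    (lintegral_indicator_one hSm).symm
  rw [h1, lintegral_eq_lmarginal_univ (fun _ => (0:ℝ)),
    lmarginal_erase' _ hind (Finset.mem_univ j)]
  calc (∫⋯∫⁻_Finset.univ.erase j,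
        (fun x => ∫⁻ t, S.indicator 1 (Function.update x j t) ∂(mu j)) ∂mu) (fun _ => (0:ℝ))
      ≤ (∫⋯∫⁻_Finset.univ.erase j, (fun _ => sConc (mu j) l) ∂mu) (fun _ => (0:ℝ)) :=
        lmarginal_mono (fun x => key x) _
    _ = sConc (mu j) l := by
        rw [lmarginal]
        simp

theorem stollmann_part1 {J : Type*} [Fintype J]
    (mu : J → Measure ℝ) [∀ j, IsProbabilityMeasure (mu j)]
    (Phi : (J → ℝ) → ℝ) (hPhi : DiagMonotone Phi) (c l : ℝ) :
    (Measure.pi mu) {q | Phi q ∈ Set.Ioo c (c + l)} ≤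
      (Fintype.card J : ENNReal) * ⨆ j, sConc (mu j) l := by
  classical
  by_cases hl : 0 < l
  swap
  · have : Set.Ioo c (c + l) = ∅ := Set.Ioo_eq_empty (by intro h; apply hl; linarith)
    simp [this]
  -- main δ-approximation bound
  have upsetbd : ∀ δ : ℝ, 0 < δ → δ < l →
      (Measure.pi mu) {q | Phi q ∈ Set.Ioo (c + δ) (c + l)} ≤
        (Fintype.card J : ENNReal) * ⨆ j, sConc (mu j) l := by
    intro δ hδ hδl
    set n := Fintype.card J with hn
    set eqv : J ≃ Fin n := Fintype.equivFin J with heqv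
    set Ω : Set (J → ℝ) := {q | c + δ < Phi q} with hΩ
    set U : Set (J → ℝ) := ⋃ q ∈ Ω, Set.univ.pi fun i => Set.Ioi (q i - δ) with hU
    have hUo : IsOpen U := isOpen_biUnion fun q _ =>
      isOpen_set_pi Set.finite_univ (fun i _ => isOpen_Ioi)
    have hUup : ∀ x ∈ U, ∀ r : J → ℝ, (∀ i, (0:ℝ) ≤ r i) → x + r ∈ U := by
      intro x hx r hr
      obtain ⟨q, hqΩ, hq⟩ := Set.mem_iUnion₂.1 hx
      refine Set.mem_iUnion₂.2 ⟨q, hqΩ, ?_⟩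
      intro i _
      have := hq i (Set.mem_univ i)
      simp only [Set.mem_Ioi] at this ⊢
      have := hr i
      simp only [Pi.add_apply]
      linarith [hq i (Set.mem_univ i), hr i]
    set w : ℕ → J → ℝ := fun k i => if ((eqv i : ℕ) < k) then l else 0 with hw
    set Uk : ℕ → Set (J → ℝ) := fun k => (fun (x : J → ℝ) => fun i => x i - w k i) ⁻¹' U with hUk
    have hmeasw : ∀ k, Measurable fun (x : J → ℝ) => fun i => x i - w k i := fun k =>
      measurable_pi_lambda _ fun i => (measurable_pi_apply i).sub measurable_const
    have hUkm : ∀ k, MeasurableSet (Uk k) := fun k => hUo.measurableSet.preimage (hmeasw k)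
    have hUkup : ∀ k, ∀ x ∈ Uk k, ∀ r : J → ℝ, (∀ i, (0:ℝ) ≤ r i) → x + r ∈ Uk k := by
      intro k x hx r hr
      have heq : (fun i => (x + r) i - w k i) = (fun i => x i - w k i) + r := by
        funext i; simp only [Pi.add_apply]; ring
      show (fun i => (x + r) i - w k i) ∈ U
      rw [heq]
      exact hUup _ hx r hr
    have hU0 : Uk 0 = U := by
      have : (fun (x : J → ℝ) => fun i => x i - w 0 i) = id := by
        funext x i; simp [hw]
      rw [hUk]; simp only [this, Set.preimage_id]
    -- step identification
    have hstep : ∀ (k : ℕ) (hk : k < n),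
        Uk (k + 1) = {x | (fun i => x i - if i = eqv.symm ⟨k, hk⟩ then l else 0) ∈ Uk k} := by
      intro k hk
      ext x
      have harg : (fun i => (fun i' => x i' - if i' = eqv.symm ⟨k, hk⟩ then l else 0) i - w k i)
          = fun i => x i - w (k + 1) i := by
        funext i
        have hwadd : (if i = eqv.symm ⟨k, hk⟩ then l else 0) + w k i = w (k + 1) i := by
          by_cases hi : i = eqv.symm ⟨k, hk⟩
          · have : (eqv i : ℕ) = k := by rw [hi]; simp
            simp [hw, hi, this]
          · have hne : (eqv i : ℕ) ≠ k := by
              intro h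
              exact hi (by rw [← Equiv.symm_apply_apply eqv i]; congr 1; exact Fin.ext h)
            have hiff : ((eqv i : ℕ) < k + 1) ↔ ((eqv i : ℕ) < k) := by omega
            simp [hw, hi, hiff]
        rw [← hwadd]; ring
      constructor
      · intro hx
        show (fun i => (fun i' => x i' - if i' = eqv.symm ⟨k, hk⟩ then l else 0) i - w k i) ∈ U
        rw [harg]; exact hx
      · intro hx
        have : (fun i => (fun i' => x i' - if i' = eqv.symm ⟨k, hk⟩ then l else 0) i - w k i) ∈ U :=
          hx
        rwa [harg] at this
    -- telescoping
    have htel : ∀ m : ℕ, Measure.pi mu (Uk 0 \ Uk m) ≤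
        ∑ k ∈ Finset.range m, Measure.pi mu (Uk k \ Uk (k + 1)) := by
      intro m
      induction m with
      | zero => simp
      | succ m ih =>
        have hsub : Uk 0 \ Uk (m + 1) ⊆ (Uk 0 \ Uk m) ∪ (Uk m \ Uk (m + 1)) := by
          intro x hx
          by_cases h : x ∈ Uk m
          · exact Or.inr ⟨h, hx.2⟩
          · exact Or.inl ⟨hx.1, h⟩
        calc Measure.pi mu (Uk 0 \ Uk (m + 1))
            ≤ Measure.pi mu ((Uk 0 \ Uk m) ∪ (Uk m \ Uk (m + 1))) := measure_mono hsub
          _ ≤ Measure.pi mu (Uk 0 \ Uk m) + Measure.pi mu (Uk m \ Uk (m + 1)) :=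
              measure_union_le _ _
          _ ≤ ∑ k ∈ Finset.range (m + 1), Measure.pi mu (Uk k \ Uk (k + 1)) := by
              rw [Finset.sum_range_succ]; exact add_le_add ih le_rfl
    -- inclusion
    have hincl : {q | Phi q ∈ Set.Ioo (c + δ) (c + l)} ⊆ Uk 0 \ Uk n := by
      intro q hq
      obtain ⟨hq1, hq2⟩ := hq
      constructor
      · rw [hU0]
        refine Set.mem_iUnion₂.2 ⟨q, hq1, ?_⟩
        intro i _
        simp only [Set.mem_Ioi]
        linarith
      · intro hqn
        have h1 : (fun i => q i - w n i) ∈ U := hqn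
        have h2 : (fun i => q i - w n i) = fun i => q i - l := by
          funext i; simp [hw, (eqv i).isLt]
        rw [h2] at h1
        obtain ⟨q', hq'Ω, hq'⟩ := Set.mem_iUnion₂.1 h1
        have hd : ∀ i, q i - l > q' i - δ := by
          intro i
          have := hq' i (Set.mem_univ i)
          simpa using this
        have hA : Phi q' + (l - δ) ≤ Phi (q' + fun _ => l - δ) := hPhi.2 q' (l - δ) (by linarith)
        have heq : (q' + fun _ => l - δ) + (fun i => q i - q' i - (l - δ)) = q := by
          funext i; simp only [Pi.add_apply]; ring
        have hB : Phi (q' + fun _ => l - δ) ≤ Phi q := by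
          have := hPhi.1 (q' + fun _ => l - δ) (fun i => q i - q' i - (l - δ))
            (fun i => by have := hd i; show (0:ℝ) ≤ q i - q' i - (l - δ); linarith)
          rwa [heq] at this
        have : c + δ < Phi q' := hq'Ω
        linarith
    -- assemble
    calc (Measure.pi mu) {q | Phi q ∈ Set.Ioo (c + δ) (c + l)}
        ≤ Measure.pi mu (Uk 0 \ Uk n) := measure_mono hincl
      _ ≤ ∑ k ∈ Finset.range n, Measure.pi mu (Uk k \ Uk (k + 1)) := htel n
      _ ≤ ∑ _k ∈ Finset.range n, ⨆ j, sConc (mu j) l := by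
          refine Finset.sum_le_sum fun k hk => ?_
          have hkn : k < n := Finset.mem_range.1 hk
          rw [hstep k hkn]
          refine le_trans (upset_coord_shift mu (Uk k) (hUkm k) (hUkup k)
            (eqv.symm ⟨k, hkn⟩) l hl) ?_
          exact le_iSup (fun j => sConc (mu j) l) _
      _ = (Fintype.card J : ENNReal) * ⨆ j, sConc (mu j) l := by
          rw [Finset.sum_const, Finset.card_range, nsmul_eq_mul, hn]
  -- union over δ = l / (m + 2)
  have hunion : {q | Phi q ∈ Set.Ioo c (c + l)} =
      ⋃ m : ℕ, {q | Phi q ∈ Set.Ioo (c + l / (m + 2)) (c + l)} := by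
    ext q
    simp only [Set.mem_setOf_eq, Set.mem_iUnion, Set.mem_Ioo]
    constructor
    · rintro ⟨h1, h2⟩
      obtain ⟨m, hm⟩ := exists_nat_gt (l / (Phi q - c))
      refine ⟨m, ?_, h2⟩
      have hd : 0 < Phi q - c := by linarith
      have hm2 : l / (Phi q - c) < (m : ℝ) + 2 := by
        have : (0:ℝ) ≤ (m:ℝ) := Nat.cast_nonneg m
        linarith
      have : l / ((m : ℝ) + 2) < Phi q - c := by
        rw [div_lt_iff₀ (by positivity)]
        rw [div_lt_iff₀ hd] at hm2
        linarith [hm2]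
      linarith
    · rintro ⟨m, h1, h2⟩
      have : 0 < l / ((m : ℝ) + 2) := by positivity
      exact ⟨by linarith, h2⟩
  have hmono : Monotone fun m : ℕ => {q | Phi q ∈ Set.Ioo (c + l / (m + 2)) (c + l)} := by
    intro m m' hmm q hq
    obtain ⟨h1, h2⟩ := hq
    have : l / ((m' : ℝ) + 2) ≤ l / ((m : ℝ) + 2) := by
      apply div_le_div_of_nonneg_left hl.le ?_ ?_ |>.trans le_rfl
      · positivity
      · push_cast; exact_mod_cast by exact_mod_cast add_le_add (Nat.cast_le.2 hmm) le_rfl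
    exact ⟨by linarith, h2⟩
  rw [hunion, hmono.measure_iUnion]
  refine iSup_le fun m => ?_
  refine upsetbd (l / (m + 2)) (by positivity) ?_
  have h1 : (1:ℝ) < (m : ℝ) + 2 := by
    have : (0:ℝ) ≤ (m:ℝ) := Nat.cast_nonneg m
    linarith
  exact div_lt_self hl h1

end StollmannAux

/-- Stollmann's bound for a product of not necessarily identical marginal measures,
together with the particular case of marginals admitting bounded densities. -/
theorem stollmann_lemma_nonidentical {J : Type*} [Fintype J]
    (mu : J → Measure ℝ) [∀ j, IsProbabilityMeasure (mu j)]
    (Phi : (J → ℝ) → ℝ) (hPhi : DiagMonotone Phi) :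
    (∀ (I : Set ℝ) (c l : ℝ), I = Set.Ioo c (c + l) →
      (Measure.pi mu) {q | Phi q ∈ I} ≤
        (Fintype.card J : ENNReal) * ⨆ j, sConc (mu j) l) ∧
    (∀ (p : J → ℝ → ENNReal) (C : J → ENNReal),
      (∀ j, mu j = volume.withDensity (p j)) → (∀ j t, p j t ≤ C j) →
      ∀ (a ε : ℝ), 0 < ε →
        (Measure.pi mu) {q | Phi q ∈ Set.Icc a (a + ε)} ≤
          (Fintype.card J : ENNReal) * (⨆ j, C j) * ENNReal.ofReal ε) := by
  classical
  have hJ : Nonempty J := by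
    by_contra h
    rw [not_nonempty_iff] at h
    have h2 := hPhi.2 (fun _ => 0) 1 one_pos
    have he : ((fun _ => (0:ℝ)) + fun _ => (1:ℝ)) = (fun _ => (0:ℝ)) :=
      funext fun i => h.elim i
    rw [he] at h2
    linarith
  have part1 : ∀ c l : ℝ, (Measure.pi mu) {q | Phi q ∈ Set.Ioo c (c + l)} ≤
      (Fintype.card J : ENNReal) * ⨆ j, sConc (mu j) l :=
    fun c l => stollmann_part1 mu Phi hPhi c l
  constructor
  · rintro I c l rfl
    exact part1 c l
  · intro p C hp hC a ε hε
    have hs : ∀ (j : J) (ε' : ℝ), sConc (mu j) ε' ≤ C j * ENNReal.ofReal ε' := by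
      intro j ε'
      refine iSup_le fun b => ?_
      rw [hp j, withDensity_apply _ measurableSet_Icc]
      calc ∫⁻ t in Set.Icc b (b + ε'), p j t ∂volume
          ≤ ∫⁻ _ in Set.Icc b (b + ε'), C j ∂volume := lintegral_mono fun t => hC j t
        _ = C j * volume (Set.Icc b (b + ε')) := by
            rw [lintegral_const, Measure.restrict_apply_univ]
        _ = C j * ENNReal.ofReal ε' := by rw [Real.volume_Icc, add_sub_cancel_left]
    have hb : ∀ δ : ℝ, 0 < δ →
        (Measure.pi mu) {q | Phi q ∈ Set.Icc a (a + ε)} ≤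
          (Fintype.card J : ENNReal) * (⨆ j, C j) * ENNReal.ofReal (ε + 2 * δ) := by
      intro δ hδ
      have h1 : {q | Phi q ∈ Set.Icc a (a + ε)} ⊆
          {q | Phi q ∈ Set.Ioo (a - δ) ((a - δ) + (ε + 2 * δ))} := by
        intro q hq
        obtain ⟨hq1, hq2⟩ := hq
        exact ⟨by linarith, by linarith⟩
      calc (Measure.pi mu) {q | Phi q ∈ Set.Icc a (a + ε)}
          ≤ (Measure.pi mu) {q | Phi q ∈ Set.Ioo (a - δ) ((a - δ) + (ε + 2 * δ))} :=
            measure_mono h1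
        _ ≤ (Fintype.card J : ENNReal) * ⨆ j, sConc (mu j) (ε + 2 * δ) :=
            part1 (a - δ) (ε + 2 * δ)
        _ ≤ (Fintype.card J : ENNReal) * ((⨆ j, C j) * ENNReal.ofReal (ε + 2 * δ)) := by
            refine mul_le_mul_right ?_ _
            refine iSup_le fun j => (hs j _).trans ?_
            exact mul_le_mul_left (le_iSup C j) _
        _ = (Fintype.card J : ENNReal) * (⨆ j, C j) * ENNReal.ofReal (ε + 2 * δ) :=
            (mul_assoc _ _ _).symm
    have htend : Filter.Tendsto
        (fun δ : ℝ => (Fintype.card J : ENNReal) * (⨆ j, C j) * ENNReal.ofReal (ε + 2 * δ))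
        (nhdsWithin 0 (Set.Ioi 0))
        (nhds ((Fintype.card J : ENNReal) * (⨆ j, C j) * ENNReal.ofReal ε)) := by
      have hcont : Continuous fun δ : ℝ => ENNReal.ofReal (ε + 2 * δ) :=
        ENNReal.continuous_ofReal.comp (by continuity)
      have h0 : Filter.Tendsto (fun δ : ℝ => ENNReal.ofReal (ε + 2 * δ)) (nhds 0)
          (nhds (ENNReal.ofReal ε)) := by
        have := hcont.tendsto 0
        simpa using this
      have hc : Filter.Tendsto (fun δ : ℝ => ENNReal.ofReal (ε + 2 * δ))
          (nhdsWithin (0:ℝ) (Set.Ioi 0)) (nhds (ENNReal.ofReal ε)) :=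
        h0.mono_left nhdsWithin_le_nhds
      exact ENNReal.Tendsto.const_mul hc (Or.inl ((ENNReal.ofReal_pos.2 hε).ne'))
    exact ge_of_tendsto htend
      (eventually_nhdsWithin_of_forall fun δ hδ => hb δ (Set.mem_Ioi.1 hδ))
end
end

section
/- Let J be a finite index set and let B(q), q ∈ ℝ^J, be a diagonally monotone family of Hermitian operators on a finite-dimensional Hilbert space H of dimension m. Then for each k ∈ {1,…,m}, the k-th eigenvalue in nondecreasing order, q ↦ E_k^{B(q)}, is a diagonally monotone function on ℝ^J. -/
open MeasureTheory ProbabilityTheory Matrix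

noncomputable section

/-! A Courant–Fischer argument: if `⟪B u, u⟫ ≥ ⟪A u, u⟫ + c` for every unit vector `u`, then the
eigenvalues at position `k : Fin m` in nondecreasing order satisfy `E_k(B) ≥ E_k(A) + c`. Indeed,
the span of the eigenvectors of `A` for its `m - k` largest eigenvalues and the span of the
eigenvectors of `B` for its `k + 1` smallest ones meet in a unit vector `u` (their dimensions add
up to `m + 1`), and then `E_k(A) + c ≤ ⟪A u, u⟫ + c ≤ ⟪B u, u⟫ ≤ E_k(B)`. The two halves of
diagonal monotonicity are the cases `c = 0` (`A = B(q)`, `B = B(q + r)`) and `c = t`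
(`B = B(q + t e)`). -/

open scoped RealInnerProductSpace
open Module Submodule

theorem Submodule.exists_norm_eq_one_mem_inf {E : Type*} [NormedAddCommGroup E]
    [NormedSpace ℝ E] [FiniteDimensional ℝ E] {V W : Submodule ℝ E}
    (h : finrank ℝ E < finrank ℝ V + finrank ℝ W) : ∃ u : E, ‖u‖ = 1 ∧ u ∈ V ∧ u ∈ W := by
  have hVW : ¬Disjoint V W := fun hd => (finrank_add_finrank_le_of_disjoint hd).not_gt h
  obtain ⟨y, hyV, hyW, hy⟩ : ∃ y ∈ V, y ∈ W ∧ y ≠ 0 := by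
    simpa [Submodule.disjoint_def] using hVW
  exact ⟨‖y‖⁻¹ • y, norm_smul_inv_norm hy, V.smul_mem _ hyV, W.smul_mem _ hyW⟩

namespace OrthonormalBasis

variable {ι E : Type*} [Fintype ι] [NormedAddCommGroup E] [InnerProductSpace ℝ E]
  (b : OrthonormalBasis ι ℝ E)

theorem inner_eq_zero_of_mem_span_image {S : Set ι} {i : ι} (hi : i ∉ S) {y : E}
    (hy : y ∈ span ℝ (b '' S)) : ⟪b i, y⟫ = 0 := by
  have hS : b '' S ⊆ (ℝ ∙ b i)ᗮ := by
    rintro _ ⟨j, hj, rfl⟩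
    exact mem_orthogonal_singleton_iff_inner_right.2
      (b.orthonormal.inner_eq_zero fun hij => hi (hij ▸ hj))
  exact mem_orthogonal_singleton_iff_inner_right.1 (span_le.2 hS hy)

theorem finrank_span_image (S : Finset ι) : finrank ℝ (span ℝ (b '' S)) = S.card := by
  rw [Set.image_eq_range]
  exact (finrank_span_eq_card
    (b.orthonormal.linearIndependent.comp _ Subtype.val_injective)).trans (by simp)

variable {T : E →ₗ[ℝ] E} {μ : ι → ℝ}

theorem inner_map_self_eq_sum (hb : ∀ i, T (b i) = μ i • b i) (y : E) :
    ⟪T y, y⟫ = ∑ i, μ i * ⟪b i, y⟫ ^ 2 := by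
  nth_rw 1 [← b.sum_repr' y]
  simp [hb, sum_inner, inner_smul_left, pow_two, mul_left_comm]

theorem inner_map_self_le_of_mem_span (hb : ∀ i, T (b i) = μ i • b i) {S : Set ι} {c : ℝ}
    (hc : ∀ i ∈ S, μ i ≤ c) {y : E} (hy : y ∈ span ℝ (b '' S)) : ⟪T y, y⟫ ≤ c * ‖y‖ ^ 2 := by
  rw [b.inner_map_self_eq_sum hb, ← b.sum_sq_inner_right, Finset.mul_sum]
  refine Finset.sum_le_sum fun i _ => ?_
  by_cases hi : i ∈ S
  · exact mul_le_mul_of_nonneg_right (hc i hi) (sq_nonneg _)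
  · simp [b.inner_eq_zero_of_mem_span_image hi hy]

theorem le_inner_map_self_of_mem_span (hb : ∀ i, T (b i) = μ i • b i) {S : Set ι} {c : ℝ}
    (hc : ∀ i ∈ S, c ≤ μ i) {y : E} (hy : y ∈ span ℝ (b '' S)) : c * ‖y‖ ^ 2 ≤ ⟪T y, y⟫ := by
  have := b.inner_map_self_le_of_mem_span (T := -T) (μ := -μ) (c := -c)
    (fun i => by simp [hb]) (fun i hi => neg_le_neg (hc i hi)) hy
  simp only [LinearMap.neg_apply, inner_neg_left] at this
  linarith

end OrthonormalBasis

theorem eigenvalue_add_le_of_inner_map_self_add_le {E : Type*} [NormedAddCommGroup E]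
    [InnerProductSpace ℝ E] {n : ℕ} {T T' : E →ₗ[ℝ] E} (b b' : OrthonormalBasis (Fin n) ℝ E)
    {μ μ' : Fin n → ℝ} (hμ : Monotone μ) (hμ' : Monotone μ')
    (hb : ∀ i, T (b i) = μ i • b i) (hb' : ∀ i, T' (b' i) = μ' i • b' i) {c : ℝ}
    (h : ∀ u : E, ‖u‖ = 1 → ⟪T u, u⟫ + c ≤ ⟪T' u, u⟫) (k : Fin n) : μ k + c ≤ μ' k := by
  have : FiniteDimensional ℝ E := b.toBasis.finiteDimensional_of_finite
  obtain ⟨u, hu, huV, huW⟩ := exists_norm_eq_one_mem_inf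
    (V := span ℝ (b '' Finset.Ici k)) (W := span ℝ (b' '' Finset.Iic k)) <| by
      rw [b.finrank_span_image, b'.finrank_span_image, Fin.card_Ici, Fin.card_Iic,
        finrank_eq_card_basis b.toBasis, Fintype.card_fin]
      omega
  have hlow := b.le_inner_map_self_of_mem_span hb (fun i hi => hμ (Finset.mem_Ici.1 hi)) huV
  have hhigh := b'.inner_map_self_le_of_mem_span hb' (fun i hi => hμ' (Finset.mem_Iic.1 hi)) huW
  rw [hu, one_pow, mul_one] at hlow hhigh
  linarith [h u hu]

namespace Matrix.IsHermitian

theorem toEuclideanLin_eigenvectorBasis {𝕜 n : Type*} [RCLike 𝕜] [Fintype n]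
    [DecidableEq n] {A : Matrix n n 𝕜} (hA : A.IsHermitian) (j : n) :
    toEuclideanLin A (hA.eigenvectorBasis j) = hA.eigenvalues j • hA.eigenvectorBasis j :=
  congrArg (WithLp.toLp 2) (hA.mulVec_eigenvectorBasis j)

theorem eigenvalues_sort_add_le {m : ℕ} {A B : Matrix (Fin m) (Fin m) ℝ}
    (hA : A.IsHermitian) (hB : B.IsHermitian) {c : ℝ}
    (h : ∀ f : Fin m → ℝ, f ⬝ᵥ f = 1 → f ⬝ᵥ A *ᵥ f + c ≤ f ⬝ᵥ B *ᵥ f) (k : Fin m) :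
    hA.eigenvalues (Tuple.sort hA.eigenvalues k) + c
      ≤ hB.eigenvalues (Tuple.sort hB.eigenvalues k) := by
  refine eigenvalue_add_le_of_inner_map_self_add_le
    (hA.eigenvectorBasis.reindex (Tuple.sort hA.eigenvalues).symm)
    (hB.eigenvectorBasis.reindex (Tuple.sort hB.eigenvalues).symm)
    (Tuple.monotone_sort _) (Tuple.monotone_sort _)
    (fun i => by simpa using hA.toEuclideanLin_eigenvectorBasis _)
    (fun i => by simpa using hB.toEuclideanLin_eigenvectorBasis _) (fun u hu => ?_) k
  have hf : WithLp.ofLp u ⬝ᵥ WithLp.ofLp u = 1 := by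
    have := real_inner_self_eq_norm_sq u
    rwa [hu, one_pow, EuclideanSpace.inner_eq_star_dotProduct, star_trivial] at this
  simpa [EuclideanSpace.inner_eq_star_dotProduct, toLpLin_apply, dotProduct_comm] using h _ hf

end Matrix.IsHermitian

/-- For a diagonally monotone family of Hermitian operators on an `m`-dimensional
Hilbert space, each eigenvalue (in nondecreasing order) is a diagonally monotone
function of the parameter `q ∈ ℝ^J`. -/
theorem eigenvalue_diagMonotone {J : Type*} [Fintype J] {m : ℕ}
    (B : (J → ℝ) → Matrix (Fin m) (Fin m) ℝ)
    (hherm : ∀ q, (B q).IsHermitian) (hDM : DiagMonotoneOp B) (k : Fin m) :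
    DiagMonotone fun q =>
      (hherm q).eigenvalues (Tuple.sort (hherm q).eigenvalues k) := by
  refine ⟨fun q r hr => ?_, fun q t ht => ?_⟩
  · simpa using (hherm q).eigenvalues_sort_add_le (hherm (q + r)) (c := 0)
      (fun f hf => by simpa using (hDM.2 f hf).1 q r hr) k
  · exact (hherm q).eigenvalues_sort_add_le _ (fun f hf => (hDM.2 f hf).2 q t ht) k
end
end
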